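/- Let u ≥ 2 and 2 ≤ i ≤ k. The 0-Frobenius number satisfies g(P_{2i}(u), P_{2i+2}(u), P_{2i+2k+1}(u)) = (P_{2i}(u)/u − 1)·P_{2i+2}(u) + (u−1)·P_{2i+2k+1}(u) − P_{2i}(u). -/

import Mathlib

def pell (u : ℕ) : ℕ → ℕ
  | 0 => 0
  | 1 => 1
  | n + 2 => u * pell u (n + 1) + pell u n

/-!
Write `a = P_{2i} = u q`, `b = P_{2i+2} = u q'` and `c = P_{2i+2k+1}`. Modulo `u` we have
`a ≡ b ≡ 0` and `c ≡ 1`, and `gcd(q, q') = 1` because consecutive Pell numbers are coprime.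
Hence the `q u` numbers `y b + z c` with `y < q`, `z < u` form a complete residue system
modulo `a`. From `P_m P_{n+1} ≤ P_{m+n}` we get `(q - 1) b < c`, which makes each of these numbers
the least representable element of its residue class; so the Frobenius number is the largest of
them minus `a`, namely `(q - 1) b + (u - 1) c - a`.
-/

lemma pell_add_two (u n : ℕ) : pell u (n + 2) = u * pell u (n + 1) + pell u n := rfl

lemma pell_add_add_one (u m n : ℕ) :
    pell u (m + n + 1) = pell u (m + 1) * pell u (n + 1) + pell u m * pell u n := by
  induction n using Nat.twoStepInduction with
  | zero => simp [pell]
  | one => simp [pell]; ring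
  | more n ih₀ ih₁ =>
    rw [show m + (n + 2) + 1 = m + n + 1 + 2 by ring, pell_add_two,
      show m + n + 1 + 1 = m + (n + 1) + 1 by ring, ih₀, ih₁, pell_add_two u (n + 1),
      pell_add_two u n]
    ring

lemma pell_mul_pell_succ_le (u m n : ℕ) : pell u m * pell u (n + 1) ≤ pell u (m + n) := by
  cases m with
  | zero => simp [pell]
  | succ m => rw [add_right_comm, pell_add_add_one]; exact Nat.le_add_right _ _

lemma pell_monotone {u : ℕ} (hu : 0 < u) : Monotone (pell u) := by
  refine monotone_nat_of_le_succ fun n => ?_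
  cases n with
  | zero => simp [pell]
  | succ n => rw [pell_add_two]; exact Nat.le_add_right_of_le (Nat.le_mul_of_pos_left _ hu)

lemma pell_pos {u : ℕ} (hu : 0 < u) {n : ℕ} (hn : 0 < n) : 0 < pell u n :=
  pell_monotone hu hn

lemma dvd_pell_two_mul (u n : ℕ) : u ∣ pell u (2 * n) := by
  induction n with
  | zero => simp [pell]
  | succ n ih => rw [Nat.mul_succ, pell_add_two]; exact dvd_add (dvd_mul_right _ _) ih

lemma pell_two_mul_add_one_modEq_one (u n : ℕ) : pell u (2 * n + 1) ≡ 1 [MOD u] := by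
  induction n with
  | zero => rfl
  | succ n ih =>
    rw [Nat.mul_succ, add_right_comm, pell_add_two, Nat.ModEq, Nat.mul_add_mod]
    exact ih

lemma coprime_pell_succ (u n : ℕ) : (pell u n).Coprime (pell u (n + 1)) := by
  induction n with
  | zero => simp [pell]
  | succ n ih =>
    rw [pell_add_two, Nat.coprime_mul_right_add_right]
    exact ih.symm

lemma coprime_of_pell_eq_mul {u n q q' : ℕ} (hu : 0 < u) (hq : pell u n = u * q)
    (hq' : pell u (n + 2) = u * q') : q.Coprime q' := by
  obtain rfl : q' = pell u (n + 1) + q :=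
    Nat.eq_of_mul_eq_mul_left hu (by rw [← hq', pell_add_two, hq, mul_add])
  exact Nat.coprime_add_self_right.2
    ((coprime_pell_succ u n).coprime_dvd_left (Dvd.intro_left _ hq.symm))

lemma pell_two_mul_mul_le {u i k : ℕ} (hu : 0 < u) (hik : i ≤ k) :
    pell u (2 * i) * pell u (2 * i + 2) ≤ pell u (2 * i + 2 * k + 1) :=
  (pell_mul_pell_succ_le u (2 * i) (2 * i + 1)).trans (pell_monotone hu (by omega))

def Representable (a b c m : ℕ) : Prop :=
  ∃ x y z : ℕ, x * a + y * b + z * c = m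

section Frobenius

variable {u q q' c : ℕ}

lemma mul_add_mul_modEq_of_modEq_one (hc : c ≡ 1 [MOD u]) (s z : ℕ) :
    u * s + z * c ≡ z [MOD u] := by
  simpa using (Nat.modEq_zero_iff_dvd.2 (dvd_mul_right u s)).add (hc.mul_left z)

lemma eq_and_eq_of_modEq (hu : 0 < u) (hqq' : q.Coprime q') (hc : c ≡ 1 [MOD u])
    {y₁ z₁ y₂ z₂ : ℕ} (hy₁ : y₁ < q) (hz₁ : z₁ < u) (hy₂ : y₂ < q) (hz₂ : z₂ < u)
    (h : y₁ * (u * q') + z₁ * c ≡ y₂ * (u * q') + z₂ * c [MOD u * q]) : y₁ = y₂ ∧ z₁ = z₂ := by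
  rw [mul_left_comm y₁, mul_left_comm y₂] at h
  have hz : z₁ = z₂ := by
    have h₁ := mul_add_mul_modEq_of_modEq_one hc (y₁ * q') z₁
    have h₂ := mul_add_mul_modEq_of_modEq_one hc (y₂ * q') z₂
    exact (h₁.symm.trans ((h.of_mul_right q).trans h₂)).eq_of_lt_of_lt hz₁ hz₂
  subst hz
  have hy : y₁ * q' ≡ y₂ * q' [MOD q] :=
    Nat.ModEq.mul_left_cancel' hu.ne' (Nat.ModEq.add_right_cancel' _ h)
  exact ⟨(hy.cancel_right_of_coprime hqq').eq_of_lt_of_lt hy₁ hy₂, rfl⟩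

lemma exists_modEq_add_mul (hu : 0 < u) (hq : 0 < q) (hqq' : q.Coprime q')
    (hc : c ≡ 1 [MOD u]) (m : ℕ) :
    ∃ y < q, ∃ z < u, m ≡ y * (u * q') + z * c [MOD u * q] := by
  have : NeZero (u * q) := ⟨(Nat.mul_pos hu hq).ne'⟩
  let f : Fin q × Fin u → ZMod (u * q) := fun p => ((p.1 * (u * q') + p.2 * c : ℕ) : ZMod (u * q))
  have hf : f.Injective := fun p₁ p₂ hp => by
    obtain ⟨h₁, h₂⟩ := eq_and_eq_of_modEq hu hqq' hc p₁.1.isLt p₁.2.isLt p₂.1.isLt p₂.2.isLt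
      ((ZMod.natCast_eq_natCast_iff _ _ _).1 hp)
    exact Prod.ext (Fin.ext h₁) (Fin.ext h₂)
  have hcard : Fintype.card (Fin q × Fin u) = Fintype.card (ZMod (u * q)) := by
    simp [ZMod.card, Nat.mul_comm]
  obtain ⟨p, hp⟩ := ((Fintype.bijective_iff_injective_and_card f).2 ⟨hf, hcard⟩).2 m
  exact ⟨p.1, p.1.isLt, p.2, p.2.isLt, ((ZMod.natCast_eq_natCast_iff _ _ _).1 hp).symm⟩

variable {G : ℕ}

lemma representable_of_lt (hu : 0 < u) (hq : 0 < q) (hqq' : q.Coprime q')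
    (hc : c ≡ 1 [MOD u]) (hG : G + u * q = (q - 1) * (u * q') + (u - 1) * c) {m : ℕ}
    (hm : G < m) : Representable (u * q) (u * q') c m := by
  obtain ⟨y, hy, z, hz, hmod⟩ := exists_modEq_add_mul hu hq hqq' hc m
  have hw : y * (u * q') + z * c ≤ G + u * q := hG ▸ add_le_add
    (Nat.mul_le_mul_right _ (Nat.le_sub_one_of_lt hy))
    (Nat.mul_le_mul_right _ (Nat.le_sub_one_of_lt hz))
  -- `w := y b + z c` satisfies `w < m + a` and `w ≡ m [MOD a]`
  have hwm : y * (u * q') + z * c ≤ m := by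
    by_contra! hlt
    have hdvd := (Nat.modEq_iff_dvd' hlt.le).1 hmod
    have := Nat.le_of_dvd (Nat.sub_pos_of_lt hlt) hdvd
    omega
  obtain ⟨x, hx⟩ := (Nat.modEq_iff_dvd' hwm).1 hmod.symm
  exact ⟨x, y, z, by rw [mul_comm x]; omega⟩

lemma not_representable (hu : 0 < u) (hq : 0 < q) (hqq' : q.Coprime q') (hc : c ≡ 1 [MOD u])
    (hbc : (q - 1) * (u * q') < c) (hG : G + u * q = (q - 1) * (u * q') + (u - 1) * c) :
    ¬ Representable (u * q) (u * q') c G := by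
  rintro ⟨x, y, z, hxyz⟩
  have hsum : x * (u * q) + y * (u * q') + z * c + u * q = (q - 1) * (u * q') + (u - 1) * c := by
    rw [hxyz, hG]
  have hzu : z < u := by
    -- otherwise `z c ≥ (u - 1) c + c > G + a`
    by_contra! hzu
    have : u * c ≤ z * c := Nat.mul_le_mul_right c hzu
    have : u * c = (u - 1) * c + c := by
      rw [← Nat.succ_mul, Nat.succ_eq_add_one, Nat.sub_add_cancel hu]
    omega
  have hsum' : u * ((x + 1) * q + y * q') + z * c = u * ((q - 1) * q') + (u - 1) * c := by
    rw [mul_left_comm u (q - 1), ← hsum]; ring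
  have hz : z = u - 1 := by
    have h₁ := mul_add_mul_modEq_of_modEq_one hc ((x + 1) * q + y * q') z
    have h₂ := mul_add_mul_modEq_of_modEq_one hc ((q - 1) * q') (u - 1)
    rw [hsum'] at h₁
    exact (h₁.symm.trans h₂).eq_of_lt_of_lt hzu (Nat.sub_lt hu one_pos)
  subst hz
  have hq' : (x + 1) * q + y * q' = (q - 1) * q' :=
    Nat.eq_of_mul_eq_mul_left hu (Nat.add_right_cancel hsum')
  have hy : y ≡ q - 1 [MOD q] := by
    refine Nat.ModEq.cancel_right_of_coprime hqq' ?_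
    rw [← hq']
    simp [Nat.ModEq]
  have hy' : q - 1 ≤ y :=
    (Nat.mod_eq_of_lt (Nat.sub_lt hq one_pos)).symm.trans hy.symm ▸ Nat.mod_le y q
  have := Nat.mul_le_mul_right q' hy'
  have := Nat.mul_pos (Nat.add_one_pos x) hq
  omega

theorem isGreatest_not_representable (hu : 0 < u) (hq : 0 < q) (hqq' : q.Coprime q')
    (hc : c ≡ 1 [MOD u]) (hbc : (q - 1) * (u * q') < c)
    (hG : G + u * q = (q - 1) * (u * q') + (u - 1) * c) :
    IsGreatest {m | ¬ Representable (u * q) (u * q') c m} G :=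
  ⟨not_representable hu hq hqq' hc hbc hG, fun _ hm => not_lt.1 fun hlt =>
    hm (representable_of_lt hu hq hqq' hc hG hlt)⟩

end Frobenius

theorem stmt_12 (u : ℕ) (hu : 2 ≤ u) (i k : ℕ) (hi : 2 ≤ i) (hik : i ≤ k) :
    ∃ g : ℕ, IsGreatest {m : ℕ | ¬ ∃ x y z : ℕ,
        x * pell u (2 * i) + y * pell u (2 * i + 2) + z * pell u (2 * i + 2 * k + 1) = m} g ∧
      (g : ℤ) = ((pell u (2 * i) / u : ℕ) - 1 : ℤ) * pell u (2 * i + 2)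
        + (u - 1 : ℤ) * pell u (2 * i + 2 * k + 1) - pell u (2 * i) := by
  have hu0 : 0 < u := by omega
  obtain ⟨q, ha⟩ := dvd_pell_two_mul u i
  obtain ⟨q', hb⟩ : u ∣ pell u (2 * i + 2) := dvd_pell_two_mul u (i + 1)
  have hc : pell u (2 * i + 2 * k + 1) ≡ 1 [MOD u] := by
    simpa [mul_add] using pell_two_mul_add_one_modEq_one u (i + k)
  set c := pell u (2 * i + 2 * k + 1)
  have hq : 0 < q := Nat.pos_of_mul_pos_left (ha ▸ pell_pos hu0 (by omega))
  have hb_pos : 0 < u * q' := hb ▸ pell_pos hu0 (by omega)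
  have habc : u * q * (u * q') ≤ c := ha ▸ hb ▸ pell_two_mul_mul_le hu0 hik
  have hbc : (q - 1) * (u * q') < c :=
    calc (q - 1) * (u * q') < q * (u * q') :=
          Nat.mul_lt_mul_of_pos_right (Nat.sub_lt hq one_pos) hb_pos
      _ ≤ u * q * (u * q') := Nat.mul_le_mul_right _ (Nat.le_mul_of_pos_left q hu0)
      _ ≤ c := habc
  have hac : u * q ≤ (q - 1) * (u * q') + (u - 1) * c :=
    calc u * q ≤ u * q * (u * q') := Nat.le_mul_of_pos_right _ hb_pos
      _ ≤ (u - 1) * c := habc.trans (Nat.le_mul_of_pos_left c (by omega))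
      _ ≤ _ := Nat.le_add_left _ _
  obtain ⟨G, hG⟩ : ∃ G, G + u * q = (q - 1) * (u * q') + (u - 1) * c := ⟨_, Nat.sub_add_cancel hac⟩
  refine ⟨G, ?_, ?_⟩
  · rw [ha, hb]
    exact isGreatest_not_representable hu0 hq (coprime_of_pell_eq_mul hu0 ha hb) hc hbc hG
  · rw [ha, hb, Nat.mul_div_cancel_left q hu0]
    have hZ := congrArg (Nat.cast : ℕ → ℤ) hG
    push_cast [Nat.cast_sub hq, Nat.cast_sub hu0] at hZ ⊢
    linarith
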